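/- Set r = max_{x∈V} ( tanh(β q_x / 2) + ∑_{y∈V} tanh(β |J_{x,y}| / 2) ) and suppose r < 1. Then for all spin configurations σ, τ ∈ {-1,+1}^V and every t ∈ ℕ, the t-step distributions of the SCA satisfy ‖(P^{SCA}_{β,q})^t(σ,·) − (P^{SCA}_{β,q})^t(τ,·)‖_TV ≤ r^t · |V|, where ‖μ−ν‖_TV = (1/2) ∑_{η ∈ {-1,+1}^V} |μ(η) − ν(η)| is the total variation distance. -/

import Mathlib

open Real Finset

variable {V : Type*}

/-- The real value of a Boolean spin: `true ↦ +1`, `false ↦ -1`. -/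
def sp (b : Bool) : ℝ := if b then 1 else -1

/-- The cavity field `h̃_x(σ) = ∑_y J_{x,y} σ_y + h_x`. -/
noncomputable def cavity [Fintype V] (J : V → V → ℝ) (h : V → ℝ) (σ : V → Bool) (x : V) : ℝ :=
  (∑ y, J x y * sp (σ y)) + h x

/-- The SCA transition kernel
`P^{SCA}_{β,q}(σ,τ) = ∏_{x∈V} e^{(β/2)(h̃_x(σ)+q_x σ_x) τ_x} / (2 cosh((β/2)(h̃_x(σ)+q_x σ_x)))`. -/
noncomputable def Psca [Fintype V] (J : V → V → ℝ) (h : V → ℝ) (β : ℝ) (q : V → ℝ)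
    (σ τ : V → Bool) : ℝ :=
  ∏ x, Real.exp ((β / 2) * (cavity J h σ x + q x * sp (σ x)) * sp (τ x)) /
    (2 * Real.cosh ((β / 2) * (cavity J h σ x + q x * sp (σ x))))

/-- The t-fold product (t-step transition probabilities) of a kernel P on configurations. -/
noncomputable def kpow [Fintype V] [DecidableEq V]
    (P : (V → Bool) → (V → Bool) → ℝ) : ℕ → (V → Bool) → (V → Bool) → ℝ
  | 0 => fun σ τ => if σ = τ then 1 else 0
  | n + 1 => fun σ τ => ∑ η, P σ η * kpow P n η τ

/-- Total variation distance `‖μ−ν‖_TV = (1/2) ∑_η |μ(η) − ν(η)|`. -/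
noncomputable def tvDist [Fintype V] [DecidableEq V] (μ ν : (V → Bool) → ℝ) : ℝ :=
  (1 / 2) * ∑ η, |μ η - ν η|

/-!
Dobrushin's contraction argument. Measure an observable `g` on configurations by its total
oscillation `∑ₓ osc g x`, where `osc g x` is the largest change of `g` under a flip of the spin
at `x`. The SCA kernel is a product of single-site laws, and the law at `x` only sees the local
field, which a flip at `y` moves by `β J_{x,y} + δ_{x,y} β q_x`; since
`|tanh a - tanh b| ≤ 2 tanh (|a - b| / 2)` and `tanh` is subadditive on `[0, ∞)`, that flip moves
the law at `x` by at most `C x y = tanh (β |J_{x,y}| / 2) + δ_{x,y} tanh (β q_x / 2)`. Swapping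
the sites' laws one at a time gives `∑_y osc (P g) y ≤ ∑ₓ (∑_y C x y) osc g x ≤ r ∑ₓ osc g x`.
After `t` steps, testing the two distributions against the sign of their difference (total
oscillation `≤ 2 |V|`) yields the bound `r ^ t |V|`.
-/

open Function

namespace Real

lemma tanh_sub_tanh (a b : ℝ) : tanh a - tanh b = sinh (a - b) / (cosh a * cosh b) := by
  rw [tanh_eq_sinh_div_cosh, tanh_eq_sinh_div_cosh, sinh_sub,
    div_sub_div _ _ (cosh_pos a).ne' (cosh_pos b).ne']

lemma tanh_le_tanh {a b : ℝ} (hab : a ≤ b) : tanh a ≤ tanh b := by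
  have : 0 ≤ tanh b - tanh a := by
    rw [tanh_sub_tanh]
    exact div_nonneg (sinh_nonneg_iff.2 (sub_nonneg.2 hab)) (mul_pos (cosh_pos b) (cosh_pos a)).le
  linarith

lemma tanh_nonneg {x : ℝ} (hx : 0 ≤ x) : 0 ≤ tanh x := tanh_zero ▸ tanh_le_tanh hx

lemma tanh_add_le {u v : ℝ} (hu : 0 ≤ u) (hv : 0 ≤ v) : tanh (u + v) ≤ tanh u + tanh v := by
  have hsu := sinh_nonneg_iff.2 hu
  have hsv := sinh_nonneg_iff.2 hv
  have hcu := cosh_pos u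
  have hcv := cosh_pos v
  rw [tanh_eq_sinh_div_cosh, tanh_eq_sinh_div_cosh, tanh_eq_sinh_div_cosh, sinh_add, cosh_add,
    div_add_div _ _ hcu.ne' hcv.ne']
  apply div_le_div_of_nonneg_left <;> nlinarith [mul_nonneg hsu hsv]

lemma abs_tanh_sub_tanh_le (a b : ℝ) : |tanh a - tanh b| ≤ 2 * tanh (|a - b| / 2) := by
  set u := |a - b| / 2
  have hu : 0 ≤ u := by positivity
  have hcosh : cosh u ^ 2 ≤ cosh a * cosh b := by
    have : cosh a * cosh b = (cosh (a + b) + cosh (2 * u)) / 2 := by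
      rw [show 2 * u = |a - b| by ring, cosh_abs, cosh_add, cosh_sub]; ring
    rw [this, cosh_two_mul]
    nlinarith [one_le_cosh (a + b), cosh_sq u]
  have hsinh : |sinh (a - b)| = 2 * sinh u * cosh u := by
    rw [abs_sinh, ← sinh_two_mul, show 2 * u = |a - b| by ring]
  rw [tanh_sub_tanh, abs_div, abs_of_pos (mul_pos (cosh_pos a) (cosh_pos b)), hsinh,
    tanh_eq_sinh_div_cosh]
  calc 2 * sinh u * cosh u / (cosh a * cosh b) ≤ 2 * sinh u * cosh u / cosh u ^ 2 :=
        div_le_div_of_nonneg_left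
          (mul_nonneg (mul_nonneg two_pos.le (sinh_nonneg_iff.2 hu)) (cosh_pos u).le)
          (pow_pos (cosh_pos u) 2) hcosh
    _ = 2 * (sinh u / cosh u) := by field_simp

end Real

lemma sp_not (b : Bool) : sp (!b) = -sp b := by cases b <;> simp [sp]

lemma abs_sp (b : Bool) : |sp b| = 1 := by cases b <;> simp [sp]

noncomputable def spinLaw (a : ℝ) (b : Bool) : ℝ := exp (a * sp b) / (2 * cosh a)

lemma spinLaw_nonneg (a : ℝ) (b : Bool) : 0 ≤ spinLaw a b := by
  unfold spinLaw; positivity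

lemma sum_spinLaw (a : ℝ) : ∑ b, spinLaw a b = 1 := by
  simp only [Fintype.sum_bool, spinLaw, sp, if_true, mul_one, Bool.false_eq_true, if_false]
  rw [cosh_eq]
  field_simp

lemma spinLaw_true (a : ℝ) : spinLaw a true = (1 + tanh a) / 2 := by
  rw [spinLaw, tanh_eq_sinh_div_cosh, sp, if_pos rfl, mul_one, ← cosh_add_sinh]
  field_simp [(cosh_pos a).ne']

lemma abs_spinLaw_true_sub_le (a b : ℝ) :
    |spinLaw a true - spinLaw b true| ≤ tanh (|a - b| / 2) := by
  rw [spinLaw_true, spinLaw_true, ← sub_div, add_sub_add_left_eq_sub, abs_div, abs_two]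
  linarith [abs_tanh_sub_tanh_le a b]

section Oscillation

variable [Fintype V] [DecidableEq V]

noncomputable def osc (f : (V → Bool) → ℝ) (x : V) : ℝ :=
  univ.sup' univ_nonempty fun ρ => |f (update ρ x true) - f (update ρ x false)|

lemma osc_nonneg (f : (V → Bool) → ℝ) (x : V) : 0 ≤ osc f x :=
  (abs_nonneg _).trans (le_sup' (fun ρ => |f (update ρ x true) - f (update ρ x false)|)
    (mem_univ fun _ => true))

lemma abs_sub_update_le_osc (f : (V → Bool) → ℝ) (x : V) (ρ : V → Bool) (b c : Bool) :
    |f (update ρ x b) - f (update ρ x c)| ≤ osc f x := by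
  have h := le_sup' (fun ρ => |f (update ρ x true) - f (update ρ x false)|) (mem_univ ρ)
  cases b <;> cases c
  · simpa using osc_nonneg f x
  · rwa [abs_sub_comm]
  · exact h
  · simpa using osc_nonneg f x

lemma abs_sub_le_sum_osc (f : (V → Bool) → ℝ) (S : Finset V) {σ τ : V → Bool}
    (hστ : ∀ x ∉ S, σ x = τ x) : |f σ - f τ| ≤ ∑ x ∈ S, osc f x := by
  induction S using Finset.induction_on generalizing σ with
  | empty => simp [funext fun x => hστ x (notMem_empty x)]
  | insert y S hy ih =>
    have hσ : update σ y (σ y) = σ := update_eq_self y σ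
    have hrest : |f (update σ y (τ y)) - f τ| ≤ ∑ x ∈ S, osc f x := by
      refine ih fun x hx => ?_
      by_cases hxy : x = y
      · simp [hxy]
      · rw [update_of_ne hxy]; exact hστ x (by simp [hxy, hx])
    calc |f σ - f τ|
        ≤ |f (update σ y (σ y)) - f (update σ y (τ y))| + |f (update σ y (τ y)) - f τ| := by
          rw [hσ]; exact abs_sub_le _ _ _
      _ ≤ osc f y + ∑ x ∈ S, osc f x := add_le_add (abs_sub_update_le_osc f y σ _ _) hrest
      _ = ∑ x ∈ insert y S, osc f x := (sum_insert hy).symm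

lemma osc_le_of_abs_le {f : (V → Bool) → ℝ} {c : ℝ} (hf : ∀ η, |f η| ≤ c) (x : V) :
    osc f x ≤ 2 * c :=
  sup'_le _ _ fun ρ _ =>
    (abs_sub _ _).trans (by linarith [hf (update ρ x true), hf (update ρ x false)])

end Oscillation

section ProductLaw

variable [Fintype V]

def prodLaw (p : V → Bool → ℝ) (η : V → Bool) : ℝ := ∏ x, p x (η x)

lemma prodLaw_nonneg {p : V → Bool → ℝ} (hp : ∀ x b, 0 ≤ p x b) (η : V → Bool) :
    0 ≤ prodLaw p η :=
  prod_nonneg fun x _ => hp x (η x)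

variable [DecidableEq V]

lemma sum_prodLaw (p : V → Bool → ℝ) : ∑ η, prodLaw p η = ∏ x, ∑ b, p x b :=
  (Fintype.prod_sum p).symm

lemma prodLaw_update (w : V → Bool → ℝ) (y : V) (u : Bool → ℝ) (η : V → Bool) :
    prodLaw (update w y u) η = u (η y) * prodLaw (update w y 1) η := by
  unfold prodLaw
  rw [← mul_prod_erase _ _ (mem_univ y), ← mul_prod_erase _ _ (mem_univ y)]
  simp only [update_self, Pi.one_apply, one_mul]
  congr 1
  exact prod_congr rfl fun x hx => by
    rw [update_of_ne (ne_of_mem_erase hx), update_of_ne (ne_of_mem_erase hx)]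

lemma abs_sum_prodLaw_update_sub_le {w : V → Bool → ℝ} (hw0 : ∀ x b, 0 ≤ w x b)
    (hw1 : ∀ x, ∑ b, w x b = 1) (y : V) {u v : Bool → ℝ} (hu : ∑ b, u b = 1)
    (hv : ∑ b, v b = 1) (g : (V → Bool) → ℝ) :
    |∑ η, prodLaw (update w y u) η * g η - ∑ η, prodLaw (update w y v) η * g η|
      ≤ |u true - v true| * osc g y := by
  set A := prodLaw (update w y 1)
  set φ : (V → Bool) → V → Bool := fun η => update η y (!η y)
  have hφ : Involutive φ := fun η => by simp [φ]
  have hAφ : ∀ η, A (φ η) = A η := fun η => by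
    simp only [A, prodLaw]
    refine prod_congr rfl fun x _ => ?_
    by_cases hxy : x = y
    · subst hxy; simp
    · simp [φ, update_of_ne hxy]
  have hA0 : ∀ η, 0 ≤ A η := prodLaw_nonneg fun x b => by
    by_cases hxy : x = y
    · subst hxy; simp
    · simp [update_of_ne hxy, hw0]
  have hA : ∑ η, A η = 2 := by
    rw [sum_prodLaw, ← mul_prod_erase _ _ (mem_univ y), prod_eq_one fun x hx => by
      simpa [update_of_ne (ne_of_mem_erase hx)] using hw1 x]
    norm_num
  have hsp : ∀ b, u b - v b = (u true - v true) * sp b := fun b => by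
    simp only [Fintype.sum_bool] at hu hv
    cases b
    · simp [sp]; linarith
    · simp [sp]
  have hdiff : ∑ η, prodLaw (update w y u) η * g η - ∑ η, prodLaw (update w y v) η * g η
      = (u true - v true) * ∑ η, sp (η y) * A η * g η := by
    simp only [prodLaw_update w y u, prodLaw_update w y v, ← sum_sub_distrib, mul_sum]
    refine sum_congr rfl fun η _ => ?_
    linear_combination (A η * g η) * hsp (η y)
  have hflip : 2 * ∑ η, sp (η y) * A η * g η = ∑ η, sp (η y) * A η * (g η - g (φ η)) := by
    have hφy : ∀ η, φ η y = !η y := fun η => update_self y _ η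
    have := hφ.bijective.sum_comp fun η => sp (η y) * A η * g η
    simp only [hAφ, hφy, sp_not] at this
    rw [two_mul]
    nth_rewrite 2 [← this]
    rw [← sum_add_distrib]
    exact sum_congr rfl fun η _ => by ring
  have hbound : |∑ η, sp (η y) * A η * g η| ≤ osc g y := by
    have : |2 * ∑ η, sp (η y) * A η * g η| ≤ ∑ η, A η * osc g y := by
      rw [hflip]
      refine (abs_sum_le_sum_abs _ _).trans (sum_le_sum fun η _ => ?_)
      rw [abs_mul, abs_mul, abs_sp, one_mul, abs_of_nonneg (hA0 η)]
      exact mul_le_mul_of_nonneg_left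
        (by simpa [φ] using abs_sub_update_le_osc g y η (η y) (!η y)) (hA0 η)
    rw [← sum_mul, hA, abs_mul, abs_two] at this
    linarith
  rw [hdiff, abs_mul]
  exact mul_le_mul_of_nonneg_left hbound (abs_nonneg _)

lemma abs_sum_prodLaw_sub_le {p q : V → Bool → ℝ} (hp0 : ∀ x b, 0 ≤ p x b)
    (hp1 : ∀ x, ∑ b, p x b = 1) (hq0 : ∀ x b, 0 ≤ q x b) (hq1 : ∀ x, ∑ b, q x b = 1)
    (g : (V → Bool) → ℝ) :
    |∑ η, prodLaw p η * g η - ∑ η, prodLaw q η * g η| ≤ ∑ x, |p x true - q x true| * osc g x := by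
  suffices ∀ S : Finset V, |∑ η, prodLaw (S.piecewise p q) η * g η - ∑ η, prodLaw q η * g η|
      ≤ ∑ x ∈ S, |p x true - q x true| * osc g x by simpa using this univ
  intro S
  induction S using Finset.induction_on with
  | empty => simp
  | insert y S hy ih =>
    have hstep := abs_sum_prodLaw_update_sub_le (w := S.piecewise p q)
      (fun x => S.piecewise_cases p q (fun w : Bool → ℝ => ∀ b, 0 ≤ w b) (hp0 x) (hq0 x))
      (fun x => S.piecewise_cases p q (fun w : Bool → ℝ => ∑ b, w b = 1) (hp1 x) (hq1 x))
      y (hp1 y) (hq1 y) g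
    rw [update_eq_self_iff.2 (piecewise_eq_of_notMem _ _ _ hy).symm] at hstep
    rw [piecewise_insert, sum_insert hy]
    exact (abs_sub_le _ _ _).trans (add_le_add hstep ih)

end ProductLaw

section Kernel

variable [Fintype V] [DecidableEq V]

noncomputable def kapply (P : (V → Bool) → (V → Bool) → ℝ) (f : (V → Bool) → ℝ)
    (σ : V → Bool) : ℝ :=
  ∑ η, P σ η * f η

lemma kapply_kpow_zero (P : (V → Bool) → (V → Bool) → ℝ) (f : (V → Bool) → ℝ) :
    kapply (kpow P 0) f = f :=
  funext fun σ => by simp [kapply, kpow]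

lemma kapply_kpow_succ (P : (V → Bool) → (V → Bool) → ℝ) (n : ℕ) (f : (V → Bool) → ℝ) :
    kapply (kpow P (n + 1)) f = kapply P (kapply (kpow P n) f) :=
  funext fun σ => by
    simp only [kapply, kpow, sum_mul, mul_sum, mul_assoc]
    exact sum_comm

lemma sum_osc_kapply_prodLaw_le (p : (V → Bool) → V → Bool → ℝ) (hp0 : ∀ σ x b, 0 ≤ p σ x b)
    (hp1 : ∀ σ x, ∑ b, p σ x b = 1) {C : V → V → ℝ}
    (hC : ∀ ρ x y, |p (update ρ y true) x true - p (update ρ y false) x true| ≤ C x y)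
    (g : (V → Bool) → ℝ) :
    ∑ y, osc (kapply (fun σ => prodLaw (p σ)) g) y ≤ ∑ x, (∑ y, C x y) * osc g x := by
  calc ∑ y, osc (kapply (fun σ => prodLaw (p σ)) g) y ≤ ∑ y, ∑ x, C x y * osc g x :=
        sum_le_sum fun y _ => sup'_le _ _ fun ρ _ =>
          (abs_sum_prodLaw_sub_le (hp0 _) (hp1 _) (hp0 _) (hp1 _) g).trans <|
            sum_le_sum fun x _ => mul_le_mul_of_nonneg_right (hC ρ x y) (osc_nonneg g x)
    _ = ∑ x, (∑ y, C x y) * osc g x := by simp only [sum_mul]; exact sum_comm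

lemma sum_osc_kapply_kpow_le (P : (V → Bool) → (V → Bool) → ℝ) {r : ℝ} (hr : 0 ≤ r)
    (hP : ∀ g, ∑ y, osc (kapply P g) y ≤ r * ∑ x, osc g x) (n : ℕ) (g : (V → Bool) → ℝ) :
    ∑ y, osc (kapply (kpow P n) g) y ≤ r ^ n * ∑ x, osc g x := by
  induction n with
  | zero => simp [kapply_kpow_zero]
  | succ n ih =>
    rw [kapply_kpow_succ, pow_succ', mul_assoc]
    exact (hP _).trans (mul_le_mul_of_nonneg_left ih hr)

lemma tvDist_kpow_le (P : (V → Bool) → (V → Bool) → ℝ) {r : ℝ} (hr : 0 ≤ r)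
    (hP : ∀ g, ∑ y, osc (kapply P g) y ≤ r * ∑ x, osc g x) (σ τ : V → Bool) (t : ℕ) :
    tvDist (kpow P t σ) (kpow P t τ) ≤ r ^ t * Fintype.card V := by
  set f : (V → Bool) → ℝ := fun η => SignType.sign (kpow P t σ η - kpow P t τ η)
  have hf : ∀ η, |f η| ≤ 1 := fun η => by
    rcases lt_trichotomy (kpow P t σ η - kpow P t τ η) 0 with h | h | h <;> simp [f, h]
  calc tvDist (kpow P t σ) (kpow P t τ)
        = (1 / 2) * (kapply (kpow P t) f σ - kapply (kpow P t) f τ) := by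
          simp only [tvDist, kapply, f, ← sum_sub_distrib, ← sub_mul, self_mul_sign]
    _ ≤ (1 / 2) * ∑ x, osc (kapply (kpow P t) f) x := by
          gcongr
          exact (le_abs_self _).trans (abs_sub_le_sum_osc _ univ (by simp))
    _ ≤ (1 / 2) * (r ^ t * ∑ x : V, 2 * 1) := by
          gcongr
          exact (sum_osc_kapply_kpow_le P hr hP t f).trans
            (by gcongr with x; exact osc_le_of_abs_le hf x)
    _ = r ^ t * Fintype.card V := by simp; ring

end Kernel

section SCA

variable [Fintype V]

noncomputable def localField (J : V → V → ℝ) (h : V → ℝ) (β : ℝ) (q : V → ℝ) (σ : V → Bool)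
    (x : V) : ℝ :=
  β / 2 * (cavity J h σ x + q x * sp (σ x))

lemma Psca_eq_prodLaw (J : V → V → ℝ) (h : V → ℝ) (β : ℝ) (q : V → ℝ) :
    Psca J h β q = fun σ => prodLaw fun x => spinLaw (localField J h β q σ x) :=
  rfl

variable [DecidableEq V]

lemma localField_update_sub (J : V → V → ℝ) (h : V → ℝ) (β : ℝ) (q : V → ℝ) (ρ : V → Bool)
    (x y : V) :
    localField J h β q (update ρ y true) x - localField J h β q (update ρ y false) x
      = β * J x y + if x = y then β * q x else 0 := by
  have hcav : cavity J h (update ρ y true) x - cavity J h (update ρ y false) x = 2 * J x y := by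
    rw [cavity, cavity, add_sub_add_right_eq_sub, ← sum_sub_distrib, sum_eq_single y]
    · simp [sp]; ring
    · intro z _ hz; simp [update_of_ne hz]
    · simp
  by_cases hxy : x = y
  · subst hxy
    simp only [localField, if_true, update_self, sp, Bool.false_eq_true, if_false]
    linear_combination β / 2 * hcav
  · simp only [localField, if_neg hxy, update_of_ne hxy]
    linear_combination β / 2 * hcav

lemma abs_spinLaw_localField_update_sub_le (J : V → V → ℝ) (h : V → ℝ) {β : ℝ} (hβ : 0 ≤ β)
    {q : V → ℝ} (hq : ∀ x, 0 ≤ q x) (ρ : V → Bool) (x y : V) :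
    |spinLaw (localField J h β q (update ρ y true) x) true
        - spinLaw (localField J h β q (update ρ y false) x) true|
      ≤ tanh (β * |J x y| / 2) + if x = y then tanh (β * q x / 2) else 0 := by
  refine (abs_spinLaw_true_sub_le _ _).trans ?_
  rw [localField_update_sub]
  have hJ : 0 ≤ β * |J x y| / 2 := by positivity
  by_cases hxy : x = y
  · have hqx : 0 ≤ β * q x / 2 := div_nonneg (mul_nonneg hβ (hq x)) two_pos.le
    rw [if_pos hxy, if_pos hxy]
    refine (tanh_le_tanh ?_).trans (tanh_add_le hJ hqx)
    calc |β * J x y + β * q x| / 2 ≤ (|β * J x y| + |β * q x|) / 2 := by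
          gcongr; exact abs_add_le _ _
      _ = β * |J x y| / 2 + β * q x / 2 := by
          rw [abs_mul, abs_mul, abs_of_nonneg hβ, abs_of_nonneg (hq x)]; ring
  · rw [if_neg hxy, if_neg hxy, add_zero, add_zero, abs_mul, abs_of_nonneg hβ]

lemma sum_osc_kapply_Psca_le (J : V → V → ℝ) (h : V → ℝ) {β : ℝ} (hβ : 0 ≤ β) {q : V → ℝ}
    (hq : ∀ x, 0 ≤ q x) {r : ℝ}
    (hr : ∀ x, tanh (β * q x / 2) + ∑ y, tanh (β * |J x y| / 2) ≤ r) (g : (V → Bool) → ℝ) :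
    ∑ y, osc (kapply (Psca J h β q) g) y ≤ r * ∑ x, osc g x := by
  rw [Psca_eq_prodLaw]
  calc _ ≤ ∑ x, (∑ y, (tanh (β * |J x y| / 2) + if x = y then tanh (β * q x / 2) else 0))
          * osc g x :=
        sum_osc_kapply_prodLaw_le _ (fun _ _ => spinLaw_nonneg _) (fun _ _ => sum_spinLaw _)
          (abs_spinLaw_localField_update_sub_le J h hβ hq) g
    _ ≤ ∑ x, r * osc g x := by
        refine sum_le_sum fun x _ => mul_le_mul_of_nonneg_right ?_ (osc_nonneg g x)
        simpa [sum_add_distrib, add_comm] using hr x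
    _ = r * ∑ x, osc g x := (mul_sum _ _ _).symm

end SCA

theorem SCA_tv_contraction_general [Fintype V] [DecidableEq V] [Nonempty V]
    (J : V → V → ℝ) (h : V → ℝ)
    (β : ℝ) (hβ : 0 ≤ β) (q : V → ℝ) (hq : ∀ x, 0 ≤ q x)
    (r : ℝ)
    (hr : r = univ.sup' univ_nonempty
        (fun x => Real.tanh (β * q x / 2) + ∑ y, Real.tanh (β * |J x y| / 2)))
    (σ τ : V → Bool) (t : ℕ) :
    tvDist (kpow (Psca J h β q) t σ) (kpow (Psca J h β q) t τ) ≤ r ^ t * (Fintype.card V : ℝ) := by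
  have hrow : ∀ x, tanh (β * q x / 2) + ∑ y, tanh (β * |J x y| / 2) ≤ r := fun x =>
    hr ▸ le_sup' (fun x => tanh (β * q x / 2) + ∑ y, tanh (β * |J x y| / 2)) (mem_univ x)
  have hr0 : 0 ≤ r := by
    obtain ⟨x⟩ := ‹Nonempty V›
    refine le_trans (add_nonneg ?_ (sum_nonneg fun y _ => tanh_nonneg ?_)) (hrow x)
    · exact tanh_nonneg (div_nonneg (mul_nonneg hβ (hq x)) two_pos.le)
    · positivity
  exact tvDist_kpow_le _ hr0 (sum_osc_kapply_Psca_le J h hβ hq hrow) σ τ t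

/-- with `r = max_x (tanh(β q_x/2) + ∑_y tanh(β|J_{x,y}|/2)) < 1`, for all
σ, τ and every t ∈ ℕ, `‖(P^{SCA}_{β,q})^t(σ,·) − (P^{SCA}_{β,q})^t(τ,·)‖_TV ≤ r^t · |V|`. -/
theorem SCA_tv_contraction [Fintype V] [DecidableEq V] [Nonempty V]
    (G : SimpleGraph V) (J : V → V → ℝ) (h : V → ℝ)
    (hsym : ∀ x y, J x y = J y x)
    (hJG : ∀ x y, ¬ G.Adj x y → J x y = 0)
    (β : ℝ) (hβ : 0 ≤ β) (q : V → ℝ) (hq : ∀ x, 0 ≤ q x)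
    (r : ℝ)
    (hr : r = univ.sup' univ_nonempty
        (fun x => Real.tanh (β * q x / 2) + ∑ y, Real.tanh (β * |J x y| / 2)))
    (hr1 : r < 1)
    (σ τ : V → Bool) (t : ℕ) :
    tvDist (kpow (Psca J h β q) t σ) (kpow (Psca J h β q) t τ) ≤ r ^ t * (Fintype.card V : ℝ) :=
  SCA_tv_contraction_general J h β hβ q hq r hr σ τ t
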